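/- Let D be a digraph and let P and Q be two disjoint dipaths from {s1, s2} to {t1, t2}. Suppose there is an arc uv with u ∈ V(P) and v ∈ V(Q), and a u-bypass B, i.e., a dipath internally disjoint from P and Q with initial vertex on P strictly before u and terminal vertex on P strictly after u. Then D contains an ({s1, s2}, {t1, t2})-shunt. -/

import Mathlib

open List

variable {V : Type*}

/-- The interior (internal vertices) of a path given as a list of vertices. -/
def interiorL (l : List V) : List V := l.tail.dropLast

/-- `l` is a directed path (dipath) in the digraph `D`. -/
def IsDipath (D : V → V → Prop) (l : List V) : Prop :=
  l ≠ [] ∧ l.Chain' D ∧ l.Nodup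

/-- `l` is a dipath from `x` to `y` in `D`. -/
def DipathFromTo (D : V → V → Prop) (l : List V) (x y : V) : Prop :=
  IsDipath D l ∧ l.head? = some x ∧ l.getLast? = some y

/-- `l` is a directed cycle in `D` (length at least 2, digraphs being strict). -/
def IsDicycle (D : V → V → Prop) (l : List V) : Prop :=
  2 ≤ l.length ∧ l.Nodup ∧ l.Chain' D ∧ ∃ a ∈ l.getLast?, ∃ b ∈ l.head?, D a b

/-- The restriction (induced subdigraph) of `D` to the vertex set `A`. -/
def restrict (D : V → V → Prop) (A : Set V) : V → V → Prop :=
  fun u v => D u v ∧ u ∈ A ∧ v ∈ A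

/-- Reachability by a dipath inside the vertex set `A`. -/
def ReachIn (D : V → V → Prop) (A : Set V) : V → V → Prop :=
  Relation.ReflTransGen (restrict D A)

/-- Reachability by a dipath. -/
def Reach (D : V → V → Prop) : V → V → Prop := Relation.ReflTransGen D

/-- `x` appears strictly before `y` along the list `l`. -/
def Before (l : List V) (x y : V) : Prop :=
  ∃ i j : ℕ, i < j ∧ l[i]? = some x ∧ l[j]? = some y

/-- `x` and `y` are consecutive (in this order) in `l`. -/
def ConsecIn (l : List V) (x y : V) : Prop :=
  ∃ i : ℕ, l[i]? = some x ∧ l[i + 1]? = some y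

/-- `D` contains a subdivision of `F`, realized by the branch-vertex map `branch` and,
for every arc `uv` of `F`, the dipath `P u v` from `branch u` to `branch v`;
the paths have length at least one and are internally disjoint from each other
and from the branch vertices. -/
def IsSubdivisionIn {W : Type*} (F : W → W → Prop) (D : V → V → Prop)
    (branch : W → V) (P : W → W → List V) : Prop :=
  Function.Injective branch ∧
  (∀ u v : W, F u v →
    DipathFromTo D (P u v) (branch u) (branch v) ∧ 2 ≤ (P u v).length) ∧
  (∀ u v : W, F u v → ∀ x ∈ interiorL (P u v), ∀ w : W, x ≠ branch w) ∧
  (∀ u v u' v' : W, F u v → F u' v' → (u, v) ≠ (u', v') →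
    ∀ x ∈ interiorL (P u v), x ∉ interiorL (P u' v'))

/-- `D` contains a subdivision of `F`. -/
def ContainsSubdivision {W : Type*} (F : W → W → Prop) (D : V → V → Prop) : Prop :=
  ∃ (branch : W → V) (P : W → W → List V), IsSubdivisionIn F D branch P

/-- An `({s1,s2},{t1,t2})`-shunt: dipaths `P`, `Q`, `R` with `R` of length at least 2,
`s(R)` on `P`, `t(R)` on `Q`, with `P`, `Q` and the interior of `R` pairwise disjoint,
`{s(P),s(Q)} = {s1,s2}` and `{t(P),t(Q)} = {t1,t2}`. -/
def IsShunt (D : V → V → Prop) (s1 s2 t1 t2 : V) : Prop :=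
  ∃ P Q R : List V,
    IsDipath D P ∧ IsDipath D Q ∧ IsDipath D R ∧ 3 ≤ R.length ∧
    (∀ z, z ∈ P → z ∉ Q) ∧
    (∀ a ∈ R.head?, a ∈ P) ∧ (∀ a ∈ R.getLast?, a ∈ Q) ∧
    (∀ z ∈ interiorL R, z ∉ P ∧ z ∉ Q) ∧
    ((P.head? = some s1 ∧ Q.head? = some s2) ∨
      (P.head? = some s2 ∧ Q.head? = some s1)) ∧
    ((P.getLast? = some t1 ∧ Q.getLast? = some t2) ∨
      (P.getLast? = some t2 ∧ Q.getLast? = some t1))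

/-!
Let `a` and `b` be the ends of the bypass `B` on `P`. Rerouting `P` through `B` gives a dipath
`P' = P[s(P), a] B P[b, t(P)]` with the same ends as `P`, still disjoint from `Q`, and missing the
segment of `P` strictly between `a` and `b`, which contains `u`. Then `(P', Q, P[a, u] v)` is a
shunt: `P[a, u] v` starts at `a ∈ P'`, ends at `v ∈ Q`, has length at least two because `a ≠ u`,
and its interior lies in that missing segment of `P`.
-/

namespace List

variable {L M N : List V} {a b z : V}

theorem perm_append_cons_append_cons : L ++ a :: (M ++ b :: N) ~ M ++ (L ++ a :: b :: N) := by
  simpa using (perm_append_comm (l₁ := L ++ [a]) (l₂ := M)).append_right (b :: N)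

theorem mem_append_cons_append_cons_iff :
    z ∈ L ++ a :: (M ++ b :: N) ↔ z ∈ M ∨ z ∈ L ++ a :: b :: N :=
  perm_append_cons_append_cons.mem_iff.trans mem_append

theorem sublist_append_cons_append_cons : L ++ a :: b :: N <+ L ++ a :: (M ++ b :: N) :=
  ((sublist_append_right M (b :: N)).cons_cons a).append_left L

theorem Nodup.notMem_append_cons_cons_of_mem (h : (L ++ a :: (M ++ b :: N)).Nodup)
    (hz : z ∈ M) : z ∉ L ++ a :: b :: N := fun hz' =>
  (nodup_append.mp (perm_append_cons_append_cons.nodup_iff.mp h)).2.2 z hz z hz' rfl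

theorem exists_eq_cons_append_singleton {l : List V} (hab : a ≠ b) (ha : l.head? = some a)
    (hb : l.getLast? = some b) : ∃ I, l = a :: (I ++ [b]) := by
  obtain ⟨t, rfl⟩ : ∃ t, l = a :: t := by
    cases l <;> simp_all
  rcases eq_nil_or_concat t with rfl | ⟨I, c, rfl⟩
  · simp_all
  · exact ⟨I, by simp_all [getLast?_cons]⟩

end List

theorem interiorL_cons_append_singleton (l : List V) (a b : V) :
    interiorL (a :: (l ++ [b])) = l := by
  simp [interiorL]

namespace Before

variable {l : List V} {x y : V}

theorem exists_eq_append (h : Before l x y) : ∃ l₁ l₂ l₃, l = l₁ ++ x :: (l₂ ++ y :: l₃) := by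
  obtain ⟨i, j, hij, hx, hy⟩ := h
  obtain ⟨hi, rfl⟩ := List.getElem?_eq_some_iff.mp hx
  have hy' : y ∈ l.drop (i + 1) := List.mem_iff_getElem?.mpr ⟨j - (i + 1), by
    rw [List.getElem?_drop, Nat.add_sub_cancel' hij]; exact hy⟩
  obtain ⟨l₂, l₃, h₂₃⟩ := List.append_of_mem hy'
  exact ⟨l.take i, l₂, l₃, by rw [← h₂₃, ← List.drop_eq_getElem_cons, List.take_append_drop]⟩

theorem mem_of_eq_append_cons (hl : l.Nodup) (h : Before l x y) {l₁ l₂ : List V}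
    (hx : l = l₁ ++ x :: l₂) : y ∈ l₂ := by
  obtain ⟨m₁, m₂, m₃, rfl⟩ := h.exists_eq_append
  rw [hx, List.nodup_middle, List.nodup_cons] at hl
  rw [eq_comm, List.append_cons_inj_of_notMem (fun h => hl.1 (List.mem_append_left _ h))
    (fun h => hl.1 (List.mem_append_right _ h))] at hx
  simp [hx.2.2]

end Before

theorem exists_eq_append_of_before_of_before {l : List V} {a u b : V} (hl : l.Nodup)
    (hau : Before l a u) (hub : Before l u b) :
    ∃ L X Y N, l = L ++ a :: (X ++ u :: Y ++ b :: N) := by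
  obtain ⟨L, X, M, hL⟩ := hau.exists_eq_append
  obtain ⟨Y, N, rfl⟩ := List.append_of_mem
    (hub.mem_of_eq_append_cons hl (l₁ := L ++ a :: X) (l₂ := M) (by simp [hL]))
  exact ⟨L, X, Y, N, by simp [hL]⟩

variable {D : V → V → Prop}

theorem isDipath_iff {l : List V} : IsDipath D l ↔ l ≠ [] ∧ l.IsChain D ∧ l.Nodup := Iff.rfl

namespace IsDipath

variable {l : List V}

theorem isChain (h : IsDipath D l) : l.IsChain D := h.2.1

theorem nodup (h : IsDipath D l) : l.Nodup := h.2.2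

theorem of_infix {s : List V} (h : IsDipath D l) (hs : s <:+: l) (hne : s ≠ []) :
    IsDipath D s :=
  ⟨hne, h.isChain.infix hs, h.nodup.sublist hs.sublist⟩

theorem concat {u v : V} (h : IsDipath D l) (hu : l.getLast? = some u) (huv : D u v)
    (hv : v ∉ l) : IsDipath D (l ++ [v]) := by
  refine isDipath_iff.mpr
    ⟨by simp, List.isChain_append.mpr ⟨h.isChain, List.isChain_singleton v, ?_⟩, ?_⟩
  · simp [hu, huv]
  · refine List.nodup_append.mpr ⟨h.nodup, List.nodup_singleton v, ?_⟩
    rintro x hx _ hy rfl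
    exact hv (List.mem_singleton.mp hy ▸ hx)

theorem reroute {L M N I : List V} {a b : V} (hP : IsDipath D (L ++ a :: (M ++ b :: N)))
    (hB : IsDipath D (a :: (I ++ [b]))) (hI : ∀ z ∈ I, z ∉ L ++ a :: (M ++ b :: N)) :
    IsDipath D (L ++ a :: (I ++ b :: N)) := by
  refine isDipath_iff.mpr ⟨by simp, ?_, ?_⟩
  · have hLa : (L ++ [a]).IsChain D := hP.isChain.infix ⟨[], M ++ b :: N, by simp⟩
    have hbN : ([b] ++ N).IsChain D := hP.isChain.infix ⟨L ++ a :: M, [], by simp⟩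
    have hLaIb : (L ++ [a] ++ (I ++ [b])).IsChain D :=
      hLa.append_overlap (by simpa using hB.isChain) (List.cons_ne_nil a [])
    have hLaIbN : (L ++ [a] ++ I ++ [b] ++ N).IsChain D :=
      List.IsChain.append_overlap (by simpa using hLaIb) hbN (List.cons_ne_nil b [])
    simpa using hLaIbN
  · refine List.perm_append_cons_append_cons.nodup_iff.mpr (List.nodup_append.mpr
      ⟨hB.nodup.sublist (by simp), hP.nodup.sublist List.sublist_append_cons_append_cons, ?_⟩)
    rintro z hz _ hw rfl
    exact hI z hz (List.sublist_append_cons_append_cons.subset hw)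

end IsDipath

theorem shunt_of_arc_bypass (D : V → V → Prop) (s1 s2 t1 t2 : V)
    (P Q : List V) (hP : IsDipath D P) (hQ : IsDipath D Q)
    (hdisj : ∀ z, z ∈ P → z ∉ Q)
    (hs : (P.head? = some s1 ∧ Q.head? = some s2) ∨
      (P.head? = some s2 ∧ Q.head? = some s1))
    (ht : (P.getLast? = some t1 ∧ Q.getLast? = some t2) ∨
      (P.getLast? = some t2 ∧ Q.getLast? = some t1))
    (u v : V) (huv : D u v) (hv : v ∈ Q)
    (B : List V) (hB : IsDipath D B)
    (hBhead : ∀ a ∈ B.head?, Before P a u)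
    (hBlast : ∀ a ∈ B.getLast?, Before P u a)
    (hBint : ∀ z ∈ interiorL B, z ∉ P ∧ z ∉ Q) :
    IsShunt D s1 s2 t1 t2 := by
  obtain ⟨a, ha⟩ : ∃ a, B.head? = some a := Option.ne_none_iff_exists'.mp (by simpa using hB.1)
  obtain ⟨b, hb⟩ : ∃ b, B.getLast? = some b := Option.ne_none_iff_exists'.mp (by simpa using hB.1)
  obtain ⟨L, X, Y, N, rfl⟩ :=
    exists_eq_append_of_before_of_before hP.nodup (hBhead a ha) (hBlast b hb)
  have hab : a ≠ b := by
    rintro rfl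
    exact (List.nodup_middle.mp hP.nodup).notMem (by simp)
  obtain ⟨I, rfl⟩ := List.exists_eq_cons_append_singleton hab ha hb
  rw [interiorL_cons_append_singleton] at hBint
  have hR : a :: X ++ [u] <:+: L ++ a :: (X ++ u :: Y ++ b :: N) := ⟨L, Y ++ b :: N, by simp⟩
  refine ⟨L ++ a :: (I ++ b :: N), Q, a :: X ++ [u] ++ [v],
    hP.reroute hB (fun z hz => (hBint z hz).1), hQ,
    (hP.of_infix hR (by simp)).concat List.getLast?_concat huv (fun h => hdisj v (hR.subset h) hv),
    by simp, fun z hz => ?_, by simp,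
    fun x hx => by rw [List.getLast?_concat, Option.mem_some_iff] at hx; exact hx ▸ hv,
    fun z hz => ?_, by simpa using hs, by simpa [List.getLast?_cons] using ht⟩
  · rcases List.mem_append_cons_append_cons_iff.mp hz with hz | hz
    · exact (hBint z hz).2
    · exact hdisj z (List.sublist_append_cons_append_cons.subset hz)
  · simp only [List.cons_append, interiorL_cons_append_singleton] at hz
    have hzP := hR.subset (List.mem_cons_of_mem a hz)
    refine ⟨fun hz' => ?_, hdisj z hzP⟩
    rcases List.mem_append_cons_append_cons_iff.mp hz' with hzI | hzP'
    · exact (hBint z hzI).1 hzP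
    · exact hP.nodup.notMem_append_cons_cons_of_mem (((List.nil_sublist Y).cons_cons u).append_left X |>.subset hz) hzP'
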